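/- arXiv:2301.02158 — 2 statements merged into one kernel-verified Lean document; each statement's English description precedes it below -/
import Mathlib

section
/- Let c ∈ (0,1) and 0 < α < c/(1−c). Then the minimum p₀ ∈ [0,1] such that c/k + p₀(1+α(k−1)) − 1 ≥ 0 for all k ∈ [1, k_max] (with k_max = 1 + α⁻¹(p₀⁻¹−1)) equals (√(cα) − √(cα − α + 1))²/(α−1)² for α ≠ 1, and the unconstrained minimizer of g over k is k* = √(c/(p₀α)). -/
/-!
Write `s = √(cα)`, `t = √(cα − α + 1)`, so that `s² − t² = α − 1` and the claimed threshold is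
`P = 1/(s+t)²`. For `p > 0` the margin `c/k + p(1 + α(k−1)) − 1` exceeds its value at the critical
point `m` (where `pαm² = c`) by `pα(k−m)²/k`. At `p = P` the critical point is `k₀ = c(s+t)/s`, where
the margin vanishes, and `k₀ > 1` exactly because `α < c/(1−c)`. Hence `P` is feasible, while any
`p < P` violates the constraint at `k₀`; comparing with the feasible value `p = 1` gives `P ≤ 1`.
-/

noncomputable def erasureMargin (c α p k : ℝ) : ℝ := c / k + p * (1 + α * (k - 1)) - 1

def IsFeasibleNoise (c α p : ℝ) : Prop :=
  ∀ k : ℝ, 1 ≤ k → p * (1 + α * (k - 1)) ≤ 1 → erasureMargin c α p k ≥ 0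

section Margin

variable {c α p k m : ℝ}

theorem erasureMargin_le_of_critical (hpα : 0 ≤ p * α) (hk : 0 < k)
    (hcrit : p * α * m ^ 2 = c) : erasureMargin c α p m ≤ erasureMargin c α p k := by
  have hdiff : erasureMargin c α p k - erasureMargin c α p m = p * α * (k - m) ^ 2 / k := by
    subst hcrit
    unfold erasureMargin
    field_simp
    ring
  have : 0 ≤ p * α * (k - m) ^ 2 / k := by positivity
  linarith

theorem isFeasibleNoise_one (hc : 0 ≤ c) (hα : 0 ≤ α) : IsFeasibleNoise c α 1 := by
  intro k hk _
  have hck : 0 ≤ c / k := div_nonneg hc (by linarith)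
  have hαk : 0 ≤ α * (k - 1) := mul_nonneg hα (by linarith)
  unfold erasureMargin
  linarith

theorem not_isFeasibleNoise_of_lt {P k₀ : ℝ} (hc : 0 < c) (hα : 0 ≤ α) (hk₀ : 1 ≤ k₀)
    (hzero : erasureMargin c α P k₀ = 0) (hp : p < P) : ¬ IsFeasibleNoise c α p := by
  intro hfeas
  have hnoise : 0 < 1 + α * (k₀ - 1) := by nlinarith
  have hlt := mul_lt_mul_of_pos_right hp hnoise
  have hck : 0 < c / k₀ := by positivity
  unfold erasureMargin at hzero
  have hmargin := hfeas k₀ hk₀ (by linarith)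
  unfold erasureMargin at hmargin
  linarith

theorem isLeast_isFeasibleNoise {P k₀ : ℝ} (hc : 0 < c) (hα : 0 ≤ α) (hk₀ : 1 ≤ k₀)
    (hP : 0 ≤ P) (hzero : erasureMargin c α P k₀ = 0)
    (hmin : ∀ k, 0 < k → erasureMargin c α P k₀ ≤ erasureMargin c α P k) :
    IsLeast {p : ℝ | p ∈ Set.Icc (0:ℝ) 1 ∧ IsFeasibleNoise c α p} P := by
  have hfeas : IsFeasibleNoise c α P := fun k hk _ => hzero ▸ hmin k (by linarith)
  have hlower : ∀ p, IsFeasibleNoise c α p → P ≤ p := fun p hp =>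
    not_lt.1 fun hlt => not_isFeasibleNoise_of_lt hc hα hk₀ hzero hlt hp
  exact ⟨⟨⟨hP, hlower 1 (isFeasibleNoise_one hc.le hα)⟩, hfeas⟩, fun p hp => hlower p hp.2⟩

end Margin

section Threshold

variable {c α s t : ℝ}

theorem sub_sq_div_sq_sub_sq_sq (h : s ^ 2 ≠ t ^ 2) :
    (s - t) ^ 2 / (s ^ 2 - t ^ 2) ^ 2 = 1 / (s + t) ^ 2 := by
  have hprod : (s - t) * (s + t) ≠ 0 := by
    rw [mul_comm, ← sq_sub_sq]
    exact sub_ne_zero.2 h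
  have hsub : s - t ≠ 0 := left_ne_zero_of_mul hprod
  have hadd : s + t ≠ 0 := right_ne_zero_of_mul hprod
  rw [sq_sub_sq, mul_pow]
  field_simp

theorem threshold_point_critical (hs : 0 < s) (ht : 0 ≤ t) (hs2 : s ^ 2 = c * α) :
    1 / (s + t) ^ 2 * α * (c * (s + t) / s) ^ 2 = c := by
  have hst : s + t ≠ 0 := by positivity
  field_simp
  linear_combination (-c) * hs2

theorem erasureMargin_threshold_point_eq_zero (hs : 0 < s) (ht : 0 ≤ t) (hs2 : s ^ 2 = c * α)
    (ht2 : t ^ 2 = c * α - α + 1) :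
    erasureMargin c α (1 / (s + t) ^ 2) (c * (s + t) / s) = 0 := by
  have hc : c ≠ 0 := by
    rintro rfl
    nlinarith
  have hst : s + t ≠ 0 := by positivity
  unfold erasureMargin
  field_simp
  linear_combination (-s) * ht2 - t * hs2

theorem one_lt_threshold_point (hs : 0 < s) (ht : 0 ≤ t) (hs2 : s ^ 2 = c * α)
    (ht2 : t ^ 2 = c * α - α + 1) (hc : 0 < c) (hαc : α * (1 - c) < c) :
    1 < c * (s + t) / s := by
  have hsq : ((1 - c) * s) ^ 2 < (c * t) ^ 2 := by
    rw [mul_pow, mul_pow, hs2, ht2]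
    nlinarith
  have hct : (1 - c) * s < c * t := lt_of_pow_lt_pow_left₀ 2 (by positivity) hsq
  rw [lt_div_iff₀ hs]
  linarith

end Threshold

/-- Erasure channel with linear scale-dependent noise, `0 < α < c/(1-c)`,
`α ≠ 1`: the threshold (the least `p₀ ∈ [0,1]` making
`g(k) = c/k + p₀(1+α(k-1)) - 1` nonnegative on `[1, k_max]`) equals
`(√(cα) − √(cα − α + 1))²/(α−1)²`, and for each `p₀ > 0` the unconstrained
minimizer of `g` over `k > 0` is `k* = √(c/(p₀α))`. -/
theorem erasure_linear_threshold_small_alpha (c α : ℝ)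
    (hc : c ∈ Set.Ioo (0:ℝ) 1) (hα : 0 < α) (hαc : α < c / (1 - c))
    (hα1 : α ≠ 1) :
    IsLeast {p₀ : ℝ | p₀ ∈ Set.Icc (0:ℝ) 1 ∧
      ∀ k : ℝ, 1 ≤ k → p₀ * (1 + α * (k - 1)) ≤ 1 →
        c / k + p₀ * (1 + α * (k - 1)) - 1 ≥ 0}
      ((Real.sqrt (c * α) - Real.sqrt (c * α - α + 1)) ^ 2 / (α - 1) ^ 2) ∧
    (∀ p₀ : ℝ, 0 < p₀ → ∀ k : ℝ, 0 < k →
      c / Real.sqrt (c / (p₀ * α)) +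
        p₀ * (1 + α * (Real.sqrt (c / (p₀ * α)) - 1)) - 1 ≤
      c / k + p₀ * (1 + α * (k - 1)) - 1) := by
  obtain ⟨hc0, hc1⟩ := hc
  have hαc' : α * (1 - c) < c := (lt_div_iff₀ (by linarith)).mp hαc
  set s := Real.sqrt (c * α)
  set t := Real.sqrt (c * α - α + 1)
  have hs2 : s ^ 2 = c * α := Real.sq_sqrt (by positivity)
  have ht2 : t ^ 2 = c * α - α + 1 := Real.sq_sqrt (by nlinarith)
  have hs : 0 < s := Real.sqrt_pos.2 (by positivity)
  have ht : 0 ≤ t := Real.sqrt_nonneg _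
  have hthreshold : (s - t) ^ 2 / (α - 1) ^ 2 = 1 / (s + t) ^ 2 := by
    have hdiff : s ^ 2 - t ^ 2 = α - 1 := by rw [hs2, ht2]; ring
    rw [← hdiff]
    exact sub_sq_div_sq_sub_sq_sq fun h => hα1 (by linarith)
  refine ⟨hthreshold ▸ isLeast_isFeasibleNoise hc0 hα.le
      (one_lt_threshold_point hs ht hs2 ht2 hc0 hαc').le (by positivity)
      (erasureMargin_threshold_point_eq_zero hs ht hs2 ht2) fun k hk =>
        erasureMargin_le_of_critical (by positivity) hk
          (threshold_point_critical hs ht hs2), ?_⟩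
  intro p₀ hp₀ k hk
  exact erasureMargin_le_of_critical (by positivity) hk
    (by rw [Real.sq_sqrt (by positivity)]; field_simp)
end

section
/- Let c ∈ (0,1) and γ ≥ c/(1−c). Then the minimum p₀ ∈ [0,1] such that c/k + p₀k^γ − 1 ≥ 0 for all k ∈ [1, p₀^{−1/γ}] equals 1−c. -/
/-!
Weighted AM-GM with weights `c` and `1 - c` gives
`c / k + (1 - c) k^γ ≥ k^{-c} k^{γ(1-c)} = k^{γ(1-c) - c}`, which is at least `1` for `k ≥ 1`
exactly when `γ ≥ c / (1 - c)`; so `p₀ = 1 - c` is feasible on all of `[1, ∞)`. Conversely,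
evaluating at `k = 1` forces `c + p₀ - 1 ≥ 0`.
-/

open Real

lemma one_le_div_add_one_sub_mul_rpow {c γ k : ℝ} (hc₀ : 0 ≤ c) (hc₁ : c ≤ 1) (hk : 1 ≤ k)
    (hγ : c ≤ γ * (1 - c)) : 1 ≤ c / k + (1 - c) * k ^ γ := by
  have hk₀ : 0 < k := by linarith
  calc 1 ≤ k ^ (γ * (1 - c) - c) := one_le_rpow hk (by linarith)
    _ = k⁻¹ ^ c * (k ^ γ) ^ (1 - c) := by
      rw [inv_rpow hk₀.le, ← rpow_neg hk₀.le, ← rpow_mul hk₀.le, ← rpow_add hk₀]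
      ring_nf
    _ ≤ c * k⁻¹ + (1 - c) * k ^ γ :=
      geom_mean_le_arith_mean2_weighted hc₀ (by linarith) (by positivity) (by positivity)
        (by ring)
    _ = c / k + (1 - c) * k ^ γ := by rw [div_eq_mul_inv]

/-- Erasure channel with power-law scale-dependent noise `p(k) = p₀ k^γ`:
if `γ ≥ c/(1-c)`, the minimum `p₀ ∈ [0,1]` such that
`c/k + p₀ k^γ - 1 ≥ 0` for all `k ∈ [1, p₀^{-1/γ}]` (i.e. all `k ≥ 1` with
`p₀ k^γ ≤ 1`) equals `1 - c`. -/
theorem erasure_powerlaw_threshold_large_gamma (c γ : ℝ)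
    (hc : c ∈ Set.Ioo (0:ℝ) 1) (hγ : γ ≥ c / (1 - c)) :
    IsLeast {p₀ : ℝ | p₀ ∈ Set.Icc (0:ℝ) 1 ∧
      ∀ k : ℝ, 1 ≤ k → p₀ * k ^ γ ≤ 1 →
        c / k + p₀ * k ^ γ - 1 ≥ 0} (1 - c) := by
  obtain ⟨hc₀, hc₁⟩ := hc
  have hγ' : c ≤ γ * (1 - c) := (div_le_iff₀ (by linarith)).mp hγ
  refine ⟨⟨⟨by linarith, by linarith⟩, fun k hk _ => ?_⟩, fun p₀ ⟨⟨_, hp₀⟩, hfeasible⟩ => ?_⟩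
  · linarith [one_le_div_add_one_sub_mul_rpow hc₀.le hc₁.le hk hγ']
  · have h := hfeasible 1 le_rfl (by rwa [one_rpow, mul_one])
    rw [one_rpow, mul_one, div_one] at h
    linarith
end
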